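/- Let (x1,...,x6) with x2, x4, x6 > 0 satisfy the system (E): x1 = 2·x2·x4 − (1/2)·(x2/x4 + x4/x2), x3 = 2·x4·x6 − (1/2)·(x4/x6 + x6/x4), x5 = 2·x2·x6 − (1/2)·(x2/x6 + x6/x2), and suppose 1 < x1 ≤ 2, 1 < x3 ≤ 2 and 1 < x5 ≤ 2 (equivalently, all three hyper-ideal edge lengths lie in (0, arccosh 2]). Then −1 < φ(x) < 1, where φ(x) = (x3·x4 + x2·x5 + x1·x2·x3 + x1·x4·x5 + x6 − x1²·x6) / (√(x1² + x3² + x5² + 2·x1·x3·x5 − 1) · √(x2² + x4² + 2·x1·x2·x4)). (Hence the corresponding decorated 3-1 type tetrahedron is a genuine, non-degenerate hyperbolic tetrahedron.) -/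
import Mathlib


/-- The cosine of the dihedral angle at the hyper-ideal edge e23 of a decorated
3-1 type hyperbolic tetrahedron. -/
noncomputable def phi (x1 x2 x3 x4 x5 x6 : ℝ) : ℝ :=
  (x3 * x4 + x2 * x5 + x1 * x2 * x3 + x1 * x4 * x5 + x6 - x1 ^ 2 * x6) /
    (Real.sqrt (x1 ^ 2 + x3 ^ 2 + x5 ^ 2 + 2 * x1 * x3 * x5 - 1) *
      Real.sqrt (x2 ^ 2 + x4 ^ 2 + 2 * x1 * x2 * x4))

set_option maxHeartbeats 2000000 in
/-- if x satisfies the system (E) and 1 < x1, x3, x5 ≤ 2, then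
−1 < φ(x) < 1; hence the decorated 3-1 tetrahedron is non-degenerate. -/
theorem stmt_14 (x1 x2 x3 x4 x5 x6 : ℝ)
    (h2 : 0 < x2) (h4 : 0 < x4) (h6 : 0 < x6)
    (e1 : x1 = 2 * x2 * x4 - (1/2) * (x2 / x4 + x4 / x2))
    (e3 : x3 = 2 * x4 * x6 - (1/2) * (x4 / x6 + x6 / x4))
    (e5 : x5 = 2 * x2 * x6 - (1/2) * (x2 / x6 + x6 / x2))
    (h1 : 1 < x1 ∧ x1 ≤ 2) (h3 : 1 < x3 ∧ x3 ≤ 2) (h5 : 1 < x5 ∧ x5 ≤ 2) :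
    -1 < phi x1 x2 x3 x4 x5 x6 ∧ phi x1 x2 x3 x4 x5 x6 < 1 := by
  obtain ⟨h1l, h1r⟩ := h1
  obtain ⟨h3l, _⟩ := h3
  obtain ⟨h5l, _⟩ := h5
  have hx2 := h2.ne'
  have hx4 := h4.ne'
  have hx6 := h6.ne'
  set N : ℝ := x3 * x4 + x2 * x5 + x1 * x2 * x3 + x1 * x4 * x5 + x6 - x1 ^ 2 * x6 with hN
  set A : ℝ := x1 ^ 2 + x3 ^ 2 + x5 ^ 2 + 2 * x1 * x3 * x5 - 1 with hA
  set B : ℝ := x2 ^ 2 + x4 ^ 2 + 2 * x1 * x2 * x4 with hB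
  have key : A * B - N ^ 2 = 12 * x2 ^ 2 * x4 ^ 2 * x6 ^ 2 * (x1 ^ 2 - 1) := by
    rw [hN, hA, hB]
    subst e1; subst e3; subst e5
    field_simp
    ring
  have hApos : 0 < A := by nlinarith [mul_pos (mul_pos (by linarith : (0:ℝ) < x1) (by linarith : (0:ℝ) < x3)) (by linarith : (0:ℝ) < x5)]
  have hBpos : 0 < B := by nlinarith [mul_pos h2 h4]
  have h1sq : (0:ℝ) < x1 ^ 2 - 1 := by nlinarith
  have hpos : 0 < 12 * x2 ^ 2 * x4 ^ 2 * x6 ^ 2 * (x1 ^ 2 - 1) := by positivity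
  have hNsq : N ^ 2 < A * B := by linarith [key]
  have hphieq : phi x1 x2 x3 x4 x5 x6 = N / Real.sqrt (A * B) := by
    rw [phi, Real.sqrt_mul hApos.le]
  have hsq : 0 < Real.sqrt (A * B) := Real.sqrt_pos.2 (mul_pos hApos hBpos)
  have habs : |N| < Real.sqrt (A * B) := by
    have := Real.sqrt_lt_sqrt (sq_nonneg N) hNsq
    rwa [Real.sqrt_sq_eq_abs] at this
  have : |phi x1 x2 x3 x4 x5 x6| < 1 := by
    rw [hphieq, abs_div, abs_of_pos hsq]
    exact (div_lt_one hsq).2 habs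
  exact ⟨neg_lt_of_abs_lt this, lt_of_abs_lt this⟩
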